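/- arXiv:1212.3682 — 4 statements merged into one kernel-verified Lean document; each statement's English description precedes it below -/
import Mathlib

section
/- Let G be a finite directed graph in which every vertex has in-degree at least one, and let τ: V(G) → ℕ be a threshold assignment with 1 ≤ τ(v) ≤ deg^in(v) for every vertex v. Let ε(G) = |E(G)|/|V(G)| be the edge density of G, let t̄ = (∑_{v ∈ V(G)} τ(v))/|V(G)| be the average threshold, and let t_M = max_{v ∈ V(G)} τ(v) be the maximum threshold. Then every dynamic monopoly M for (G, τ) satisfies |M| ≥ |V(G)| · (1 − ε(G)/t̄) · (t̄/t_M). -/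
/-!
Basic notions for dynamic monopolies in finite directed graphs.
A directed graph on a vertex type `V` is given by its adjacency relation
`Adj : V → V → Prop`, where `Adj u v` means there is an edge from `u` to `v`.
-/

variable {V : Type*}

/-- The in-degree of a vertex `v`: the number of vertices `u` with an edge from `u` to `v`. -/
noncomputable def inDeg (Adj : V → V → Prop) (v : V) : ℕ :=
  {u | Adj u v}.ncard

/-- A directed graph is simple: no loops, and no two oppositely directed edges
between the same pair of vertices. -/
def IsSimple (Adj : V → V → Prop) : Prop :=
  Irreflexive Adj ∧ ∀ u v, Adj u v → ¬ Adj v u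

/-- A directed graph is strongly connected if any vertex is reachable from any other
by a directed path. -/
def StronglyConnected (Adj : V → V → Prop) : Prop :=
  ∀ u v : V, Relation.ReflTransGen Adj u v

/-- `M` is a dynamic monopoly (dynamo) for `(G, τ)`: the vertex set can be partitioned
into levels `D_0 = M, D_1, …, D_t` (encoded by a level function) such that every vertex
`v` of level `i ≥ 1` receives at least `τ v` edges from vertices of smaller level. -/
def IsDynamo (Adj : V → V → Prop) (τ : V → ℕ) (M : Set V) : Prop :=
  ∃ level : V → ℕ,
    (∀ v, level v = 0 ↔ v ∈ M) ∧
    ∀ v, 1 ≤ level v → τ v ≤ {u | Adj u v ∧ level u < level v}.ncard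

/-- The strict majority threshold `⌈(deg^in(v)+1)/2⌉` (as a natural number,
`(d + 2) / 2 = ⌈(d+1)/2⌉`). -/
noncomputable def strictMajority (Adj : V → V → Prop) (v : V) : ℕ :=
  (inDeg Adj v + 2) / 2

/-- The `f`-value of a vertex `v` with respect to an ordering `σ` of the vertices:
the number of in-neighbours of `v` appearing after `v` minus the number of
in-neighbours of `v` appearing before `v`. -/
noncomputable def fval [Fintype V] (Adj : V → V → Prop)
    (σ : V ≃ Fin (Fintype.card V)) (v : V) : ℤ :=
  ({u | Adj u v ∧ σ v < σ u}.ncard : ℤ) - ({u | Adj u v ∧ σ u < σ v}.ncard : ℤ)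

/-- lower bound `|M| ≥ n (1 - ε/t̄)(t̄/t_M)` for any dynamic monopoly `M`,
where `n = |V(G)|`, `ε = |E(G)|/n` is the edge density, `t̄` the average threshold and
`t_M` the maximum threshold. -/
theorem dynamo_ge_density_bound
    {V : Type*} [Fintype V] [Nonempty V] (Adj : V → V → Prop) (τ : V → ℕ)
    (hdeg : ∀ v, 1 ≤ inDeg Adj v) (hτ1 : ∀ v, 1 ≤ τ v) (hτ2 : ∀ v, τ v ≤ inDeg Adj v)
    (M : Set V) (hM : IsDynamo Adj τ M) :
    (Fintype.card V : ℝ) *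
        (1 - (({p : V × V | Adj p.1 p.2}.ncard : ℝ) / (Fintype.card V : ℝ)) /
              ((∑ v : V, (τ v : ℝ)) / (Fintype.card V : ℝ))) *
        (((∑ v : V, (τ v : ℝ)) / (Fintype.card V : ℝ)) / ((Finset.univ.sup τ : ℕ) : ℝ))
      ≤ (M.ncard : ℝ) := by
  classical
  obtain ⟨level, hlev0, hlevτ⟩ := hM
  set n := Fintype.card V with hn
  have hn0 : 0 < (n : ℝ) := by exact_mod_cast Fintype.card_pos
  set Efin : Finset (V × V) := Finset.univ.filter (fun p => Adj p.1 p.2) with hEfin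
  have hE : {p : V × V | Adj p.1 p.2}.ncard = Efin.card := by
    rw [← Set.ncard_coe_finset]; congr 1; ext p; simp [hEfin]
  set Mfin : Finset V := Set.toFinset M with hMfin
  have hMcard : M.ncard = Mfin.card := Set.ncard_eq_toFinset_card' M
  set tM : ℕ := Finset.univ.sup τ with htM
  have htM0 : 0 < (tM : ℝ) := by
    have : 1 ≤ tM := le_trans (hτ1 (Classical.arbitrary V))
      (Finset.le_sup (Finset.mem_univ _))
    exact_mod_cast this
  have hS0 : 0 < ∑ v : V, (τ v : ℝ) := by
    have : (0:ℕ) < ∑ v : V, τ v :=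
      Finset.sum_pos (fun v _ => hτ1 v) Finset.univ_nonempty
    push_cast
    exact_mod_cast this
  set F : V → Finset V := fun v =>
    Finset.univ.filter (fun u => Adj u v ∧ level u < level v) with hF
  have h1 : ∑ v ∈ Mfinᶜ, τ v ≤ Efin.card := by
    have hτF : ∀ v ∈ Mfinᶜ, τ v ≤ (F v).card := by
      intro v hv
      have hv' : v ∉ M := by
        simpa [hMfin, Set.mem_toFinset] using Finset.mem_compl.mp hv
      have hl : 1 ≤ level v := by
        rcases Nat.eq_zero_or_pos (level v) with h | h
        · exact absurd ((hlev0 v).mp h) hv'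
        · exact h
      calc τ v ≤ {u | Adj u v ∧ level u < level v}.ncard := hlevτ v hl
        _ = (F v).card := by
            rw [← Set.ncard_coe_finset]; congr 1; ext u; simp [hF]
    calc ∑ v ∈ Mfinᶜ, τ v ≤ ∑ v ∈ Mfinᶜ, (F v).card := Finset.sum_le_sum hτF
      _ = (Mfinᶜ.biUnion (fun v => (F v).image (fun u => (u, v)))).card := by
          rw [Finset.card_biUnion]
          · exact Finset.sum_congr rfl fun v _ =>
              (Finset.card_image_of_injective _ (fun a b h => by
                simpa using congrArg Prod.fst h)).symm
          · intro x _ y _ hxy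
            refine Finset.disjoint_left.mpr ?_
            intro p hp hq
            simp only [Finset.mem_image] at hp hq
            obtain ⟨a, _, rfl⟩ := hp
            obtain ⟨b, _, hb⟩ := hq
            exact hxy (by simpa using (congrArg Prod.snd hb).symm)
      _ ≤ Efin.card := by
          refine Finset.card_le_card ?_
          intro p hp
          simp only [Finset.mem_biUnion, Finset.mem_image] at hp
          obtain ⟨v, _, u, hu, rfl⟩ := hp
          simp only [hF, Finset.mem_filter, Finset.mem_univ, true_and] at hu
          simp [hEfin, hu.1]
  have h2 : ∑ v ∈ Mfin, τ v ≤ Mfin.card * tM := by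
    simpa [mul_comm] using
      Finset.sum_le_card_nsmul Mfin τ tM (fun v _ => Finset.le_sup (Finset.mem_univ v))
  have key : (∑ v : V, τ v) ≤ Efin.card + Mfin.card * tM := by
    calc (∑ v : V, τ v) = ∑ v ∈ Mfinᶜ, τ v + ∑ v ∈ Mfin, τ v := by
          rw [Finset.sum_compl_add_sum]
      _ ≤ Efin.card + Mfin.card * tM := Nat.add_le_add h1 h2
  have keyR : (∑ v : V, (τ v : ℝ)) - (Efin.card : ℝ) ≤ (Mfin.card : ℝ) * tM := by
    have : ((∑ v : V, τ v : ℕ) : ℝ) ≤ (Efin.card : ℝ) + (Mfin.card : ℝ) * tM := by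
      exact_mod_cast key
    push_cast at this ⊢
    linarith
  rw [hE, hMcard]
  have hLHS : (n : ℝ) *
        (1 - ((Efin.card : ℝ) / (n : ℝ)) / ((∑ v : V, (τ v : ℝ)) / (n : ℝ))) *
        (((∑ v : V, (τ v : ℝ)) / (n : ℝ)) / (tM : ℝ))
      = ((∑ v : V, (τ v : ℝ)) - (Efin.card : ℝ)) / (tM : ℝ) := by
    field_simp
  rw [hLHS, div_le_iff₀ htM0]
  exact keyR
end

section
/- Let G be a finite simple strongly connected directed graph on n ≥ 1 vertices. Then there exists an ordering σ of V(G) with the following properties: (1) at most one vertex w satisfies f_σ(w) = 0, and if G contains a vertex of odd in-degree then no vertex satisfies f_σ(w) = 0; (2) for any vertices u, v, w, if f_σ(u) > 0, f_σ(v) < 0 and f_σ(w) = 0, then σ(u) < σ(w) < σ(v); in particular every vertex with positive f_σ-value precedes every vertex with negative f_σ-value. -/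
/-!
Basic notions for dynamic monopolies in finite directed graphs.
A directed graph on a vertex type `V` is given by its adjacency relation
`Adj : V → V → Prop`, where `Adj u v` means there is an edge from `u` to `v`.
-/

variable {V : Type*}

/-!
Fix a root `r` and process the vertices so that `r` comes last and every other vertex has an
in-neighbour processed after it (a reversed breadth-first order from `r`). Greedily, a vertex joins
the front block if fewer than half of its in-neighbours are already in the front block, and the back
block otherwise; the ordering lists the front block in processing order, then the back block in
reverse processing order. A front vertex has fewer in-neighbours before it than after it, so
`f > 0`. The in-neighbours after a back vertex `v` are the back ones processed before `v`; as at
least half of all its in-neighbours are front ones processed before `v`, this gives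
`f(v) ≤ -2 · #{in-neighbours processed after v}`, which is negative unless `v = r`, and `r` heads
the back block. Finally `f(v) ≡ deg^in(v) (mod 2)`, so a root of odd in-degree, when there is one,
has `f ≠ 0` as well.
-/

open Function Relation

section Counting

variable {Adj : V → V → Prop}

lemma ncard_and_add_ncard_and_not [Finite V] (P Q : V → Prop) :
    {u | P u ∧ Q u}.ncard + {u | P u ∧ ¬ Q u}.ncard = {u | P u}.ncard :=
  Set.ncard_inter_add_ncard_sdiff_eq_ncard {u | P u} {u | Q u} (Set.toFinite _)

lemma ncard_lt_add_ncard_gt [Finite V] {α : Type*} [LinearOrder α] (hirr : ∀ v, ¬ Adj v v)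
    {κ : V → α} (hκ : Injective κ) (v : V) :
    {u | Adj u v ∧ κ u < κ v}.ncard + {u | Adj u v ∧ κ v < κ u}.ncard = inDeg Adj v := by
  have hgt : {u | Adj u v ∧ κ v < κ u} = {u | Adj u v ∧ ¬ κ u < κ v} := by
    ext u
    refine and_congr_right fun huv => ?_
    rw [not_lt]
    exact ⟨le_of_lt, fun h => h.lt_of_ne (hκ.ne fun huv' => hirr v (huv' ▸ huv))⟩
  rw [hgt, ncard_and_add_ncard_and_not]
  rfl

variable [Fintype V]

lemma fval_eq_inDeg_sub (hirr : ∀ v, ¬ Adj v v) (σ : V ≃ Fin (Fintype.card V)) (v : V) :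
    fval Adj σ v = inDeg Adj v - 2 * {u | Adj u v ∧ σ u < σ v}.ncard := by
  have := ncard_lt_add_ncard_gt hirr σ.injective v
  rw [fval]
  omega

lemma fval_eq_sub_inDeg (hirr : ∀ v, ¬ Adj v v) (σ : V ≃ Fin (Fintype.card V)) (v : V) :
    fval Adj σ v = 2 * {u | Adj u v ∧ σ v < σ u}.ncard - inDeg Adj v := by
  have := ncard_lt_add_ncard_gt hirr σ.injective v
  rw [fval]
  omega

lemma fval_ne_zero_of_odd (hirr : ∀ v, ¬ Adj v v) (σ : V ≃ Fin (Fintype.card V)) {v : V}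
    (hv : Odd (inDeg Adj v)) : fval Adj σ v ≠ 0 := by
  rw [fval_eq_inDeg_sub hirr]
  obtain ⟨k, hk⟩ := hv
  omega

end Counting

lemma exists_equiv_fin_lt_iff [Fintype V] {α : Type*} [LinearOrder α] {κ : V → α}
    (hκ : Injective κ) : ∃ σ : V ≃ Fin (Fintype.card V), ∀ u w, σ u < σ w ↔ κ u < κ w := by
  let _ := LinearOrder.lift' κ hκ
  exact ⟨(Fintype.orderIsoFinOfCardEq V rfl).symm.toEquiv, fun _ _ =>
    (Fintype.orderIsoFinOfCardEq V rfl).symm.lt_iff_lt⟩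

section Reachability

variable (Adj : V → V → Prop) (r : V)

def reachWithin : ℕ → Set V
  | 0 => {r}
  | k + 1 => {v | v ∈ reachWithin k ∨ ∃ u ∈ reachWithin k, Adj u v}

variable {Adj r}

lemma exists_mem_reachWithin {v : V} (h : ReflTransGen Adj r v) :
    ∃ k, v ∈ reachWithin Adj r k := by
  induction h with
  | refl => exact ⟨0, rfl⟩
  | tail _ hbc ih =>
    obtain ⟨k, hk⟩ := ih
    exact ⟨k + 1, Or.inr ⟨_, hk, hbc⟩⟩

lemma exists_rank_of_reachable (hr : ∀ v, ReflTransGen Adj r v) :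
    ∃ d : V → ℕ, d r = 0 ∧ ∀ v, v ≠ r → ∃ u, Adj u v ∧ d u < d v := by
  classical
  have hex := fun v => exists_mem_reachWithin (hr v)
  refine ⟨fun v => Nat.find (hex v), (Nat.find_eq_zero _).2 rfl, fun v hv => ?_⟩
  have hv' := Nat.find_spec (hex v)
  obtain ⟨j, hj⟩ : ∃ j, Nat.find (hex v) = j + 1 :=
    Nat.exists_eq_succ_of_ne_zero fun h0 => hv (by rw [h0] at hv'; exact hv')
  rw [hj] at hv'
  rcases hv' with hvj | ⟨u, hu, huv⟩
  · exact absurd hvj (Nat.find_min (hex v) (by omega))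
  · exact ⟨u, huv, by dsimp only; have := Nat.find_min' (hex u) hu; omega⟩

lemma exists_processing_order [Fintype V] (hr : ∀ v, ReflTransGen Adj r v) :
    ∃ π : V ≃ Fin (Fintype.card V), ∀ v, v ≠ r → π v < π r ∧ ∃ u, Adj u v ∧ π v < π u := by
  obtain ⟨d, hdr, hd⟩ := exists_rank_of_reachable hr
  let e := Fintype.equivFin V
  have hκ : Injective fun v => toLex (OrderDual.toDual (d v), e v) :=
    fun u w h => e.injective (congrArg Prod.snd (toLex.injective h))
  obtain ⟨π, hπ⟩ := exists_equiv_fin_lt_iff hκ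
  have hmono : ∀ u w, d u < d w → π w < π u := fun u w h =>
    (hπ w u).2 (Prod.Lex.toLex_lt_toLex.2 (Or.inl h))
  refine ⟨π, fun v hv => ⟨hmono r v ?_, ?_⟩⟩
  · obtain ⟨u, -, hu⟩ := hd v hv
    omega
  · obtain ⟨u, huv, hu⟩ := hd v hv
    exact ⟨u, huv, hmono u v hu⟩

end Reachability

section Greedy

variable [Fintype V] (Adj : V → V → Prop) (π : V ≃ Fin (Fintype.card V))

-- Binding the proof of `π u < π v` makes the recursion well founded; `inFront_iff` drops it.
def InFront (v : V) : Prop :=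
  2 * {u | Adj u v ∧ ∃ _ : π u < π v, InFront u}.ncard < inDeg Adj v
termination_by (π v : ℕ)

open scoped Classical in
noncomputable def greedyKey (v : V) : ℕ :=
  if InFront Adj π v then π v else 2 * Fintype.card V - π v

lemma greedyKey_injective : Injective (greedyKey Adj π) := by
  intro u w h
  have := (π u).isLt
  have := (π w).isLt
  refine π.injective (Fin.ext ?_)
  unfold greedyKey at h
  split_ifs at h <;> omega

variable {Adj π} {u v w : V}

lemma inFront_iff :
    InFront Adj π v ↔ 2 * {u | Adj u v ∧ π u < π v ∧ InFront Adj π u}.ncard < inDeg Adj v := by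
  rw [InFront]
  simp only [exists_prop]

lemma greedyKey_lt_of_inFront (hu : InFront Adj π u) (hw : ¬ InFront Adj π w) :
    greedyKey Adj π u < greedyKey Adj π w := by
  have := (π u).isLt
  have := (π w).isLt
  simp only [greedyKey, if_pos hu, if_neg hw]
  omega

lemma greedyKey_lt_iff_of_inFront (hu : InFront Adj π u) (hw : InFront Adj π w) :
    greedyKey Adj π u < greedyKey Adj π w ↔ π u < π w := by
  simp only [greedyKey, if_pos hu, if_pos hw, Fin.lt_def]

lemma greedyKey_lt_iff_of_not_inFront (hu : ¬ InFront Adj π u) (hw : ¬ InFront Adj π w) :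
    greedyKey Adj π u < greedyKey Adj π w ↔ π w < π u := by
  have := (π u).isLt
  have := (π w).isLt
  simp only [greedyKey, if_neg hu, if_neg hw, Fin.lt_def]
  omega

end Greedy

section GreedyOrdering

variable [Fintype V] {Adj : V → V → Prop} {π σ : V ≃ Fin (Fintype.card V)} {v : V}

lemma fval_pos_of_inFront (hirr : ∀ v, ¬ Adj v v)
    (hσ : ∀ u w, σ u < σ w ↔ greedyKey Adj π u < greedyKey Adj π w) (hv : InFront Adj π v) :
    0 < fval Adj σ v := by
  have hbefore : {u | Adj u v ∧ σ u < σ v} = {u | Adj u v ∧ π u < π v ∧ InFront Adj π u} := by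
    ext u
    refine and_congr_right fun _ => ?_
    rw [hσ]
    by_cases hu : InFront Adj π u
    · simp only [greedyKey_lt_iff_of_inFront hu hv, hu, and_true]
    · simp only [hu, and_false, iff_false, not_lt]
      exact (greedyKey_lt_of_inFront hv hu).le
  have := inFront_iff.1 hv
  rw [fval_eq_inDeg_sub hirr, hbefore]
  omega

lemma fval_add_two_mul_le_of_not_inFront (hirr : ∀ v, ¬ Adj v v)
    (hσ : ∀ u w, σ u < σ w ↔ greedyKey Adj π u < greedyKey Adj π w) (hv : ¬ InFront Adj π v) :
    fval Adj σ v + 2 * {u | Adj u v ∧ π v < π u}.ncard ≤ 0 := by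
  have hafter : {u | Adj u v ∧ σ v < σ u} = {u | Adj u v ∧ π u < π v ∧ ¬ InFront Adj π u} := by
    ext u
    refine and_congr_right fun _ => ?_
    rw [hσ]
    by_cases hu : InFront Adj π u
    · simp only [hu, not_true, and_false, iff_false, not_lt]
      exact (greedyKey_lt_of_inFront hu hv).le
    · simp only [greedyKey_lt_iff_of_not_inFront hv hu, hu, not_false_eq_true, and_true]
  have hsplit := ncard_and_add_ncard_and_not (fun u => Adj u v ∧ π u < π v) (InFront Adj π)
  have hdeg := ncard_lt_add_ncard_gt hirr π.injective v
  have hgreedy := inFront_iff.not.1 hv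
  simp only [and_assoc] at hsplit
  rw [fval_eq_sub_inDeg hirr, hafter]
  omega

end GreedyOrdering

theorem exists_ordering_fval_sorted_of_reachable [Fintype V] {Adj : V → V → Prop}
    (hirr : ∀ v, ¬ Adj v v) {r : V} (hr : ∀ v, ReflTransGen Adj r v) :
    ∃ σ : V ≃ Fin (Fintype.card V),
      (∀ w, fval Adj σ w = 0 → w = r) ∧
      (∀ u v, 0 < fval Adj σ u → fval Adj σ v ≤ 0 → σ u < σ v) ∧
      (∀ v, fval Adj σ r = 0 → fval Adj σ v < 0 → σ r < σ v) := by
  obtain ⟨π, hπ⟩ := exists_processing_order hr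
  obtain ⟨σ, hσ⟩ := exists_equiv_fin_lt_iff (greedyKey_injective Adj π)
  have hfront : ∀ v, InFront Adj π v ↔ 0 < fval Adj σ v := fun v =>
    ⟨fval_pos_of_inFront hirr hσ, fun hv => by_contra fun hvF => by
      have := fval_add_two_mul_le_of_not_inFront hirr hσ hvF
      omega⟩
  have hneg : ∀ v, ¬ InFront Adj π v → v ≠ r → fval Adj σ v < 0 := fun v hvF hvr => by
    obtain ⟨u, huv, hu⟩ := (hπ v hvr).2
    have : 0 < {u | Adj u v ∧ π v < π u}.ncard :=
      (Set.ncard_pos (Set.toFinite _)).2 ⟨u, huv, hu⟩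
    have := fval_add_two_mul_le_of_not_inFront hirr hσ hvF
    omega
  refine ⟨σ, fun w hw => ?_, fun u v hu hv => ?_, fun v hr0 hv => ?_⟩
  · by_contra hwr
    by_cases hwF : InFront Adj π w
    · exact ((hfront w).1 hwF).ne' hw
    · exact (hneg w hwF hwr).ne hw
  · rw [hσ]
    exact greedyKey_lt_of_inFront ((hfront u).2 hu) fun hvF => hv.not_gt ((hfront v).1 hvF)
  · have hrF : ¬ InFront Adj π r := fun hrF => ((hfront r).1 hrF).ne' hr0
    have hvF : ¬ InFront Adj π v := fun hvF => hv.not_gt ((hfront v).1 hvF)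
    have hvr : v ≠ r := by rintro rfl; omega
    rw [hσ, greedyKey_lt_iff_of_not_inFront hrF hvF]
    exact (hπ v hvr).1

/-- every simple strongly connected directed graph admits an ordering `σ`
such that (1) at most one vertex has zero `f_σ`-value, and none if some vertex has odd
in-degree; (2) every vertex of positive `f_σ`-value precedes every vertex of zero
`f_σ`-value, which in turn precedes every vertex of negative `f_σ`-value; in particular
every vertex of positive `f_σ`-value precedes every vertex of negative `f_σ`-value. -/
theorem exists_ordering_fval_signs_sorted
    {V : Type*} [Fintype V] [Nonempty V] (Adj : V → V → Prop)
    (hsimple : IsSimple Adj) (hsc : StronglyConnected Adj) :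
    ∃ σ : V ≃ Fin (Fintype.card V),
      {v | fval Adj σ v = 0}.Subsingleton ∧
      ((∃ v, Odd (inDeg Adj v)) → ∀ w, fval Adj σ w ≠ 0) ∧
      (∀ u v w, 0 < fval Adj σ u → fval Adj σ v < 0 → fval Adj σ w = 0 →
        σ u < σ w ∧ σ w < σ v) ∧
      (∀ u v, 0 < fval Adj σ u → fval Adj σ v < 0 → σ u < σ v) := by
  obtain ⟨r, hr⟩ : ∃ r, (∃ v, Odd (inDeg Adj v)) → Odd (inDeg Adj r) := by
    by_cases hodd : ∃ v, Odd (inDeg Adj v)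
    · exact hodd.imp fun _ hv _ => hv
    · exact ⟨Classical.arbitrary V, fun h => absurd h hodd⟩
  obtain ⟨σ, hzero, hpos, hroot⟩ := exists_ordering_fval_sorted_of_reachable hsimple.1 (hsc r)
  refine ⟨σ, fun a ha b hb => (hzero a ha).trans (hzero b hb).symm, fun hodd w hw => ?_,
    fun u v w hu hv hw => ?_, fun u v hu hv => hpos u v hu hv.le⟩
  · obtain rfl := hzero w hw
    exact fval_ne_zero_of_odd hsimple.1 σ (hr hodd) hw
  · obtain rfl := hzero w hw
    exact ⟨hpos u w hu hw.le, hroot v hw hv⟩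
end

section
/- For every positive integer k there exists a finite simple directed graph G_k on 5k+1 vertices in which every vertex has in-degree at least one, such that every strict majority dynamic monopoly of G_k contains at least 2k vertices. Consequently, no upper bound of the form c·n with c < 2/5 (up to additive o(n) terms) can hold for the smallest strict majority dynamic monopoly of all n-vertex simple directed graphs with positive minimum in-degree. -/
/-!
Basic notions for dynamic monopolies in finite directed graphs.
A directed graph on a vertex type `V` is given by its adjacency relation
`Adj : V → V → Prop`, where `Adj u v` means there is an edge from `u` to `v`.
-/

variable {V : Type*}

/-!
No edge enters a copy of `K₅` from outside, and every vertex of a copy has in-degree `2`, hence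
threshold `2`. So if a dynamo does not contain a whole copy, the first vertex of that copy to be
activated after round `0` has two in-neighbours in the copy that belong to the dynamo: every
dynamo meets each of the `k` copies in at least two vertices. With `n = 5k + 1`, a bound
`c n + o(n)` therefore forces `2k ≤ c (5k + 1) + o(k)`, i.e. `2/5 ≤ c`.
-/

open Filter Topology

def IsInClosed (Adj : V → V → Prop) (C : Set V) : Prop :=
  ∀ ⦃u v⦄, Adj u v → v ∈ C → u ∈ C

section Dynamo

variable {Adj : V → V → Prop} {τ : V → ℕ} {M : Set V} {t : ℕ}

/-- Take a vertex of `C \ M` of least level: all its in-neighbours of smaller level lie in `C`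
and, by minimality, in `M`. -/
theorem IsDynamo.le_ncard_inter [Finite V] (hM : IsDynamo Adj τ M) {C : Set V}
    (hC : IsInClosed Adj C) (hτ : ∀ v ∈ C, t ≤ τ v) (hcard : t ≤ C.ncard) :
    t ≤ (M ∩ C).ncard := by
  obtain ⟨level, hlevel_zero, hlevel⟩ := hM
  by_cases hCM : C ⊆ M
  · rwa [Set.inter_eq_right.mpr hCM]
  obtain ⟨v, ⟨hvC, hvM⟩, hmin⟩ :=
    (C \ M).exists_min_image level (Set.toFinite _) (Set.sdiff_nonempty.mpr hCM)
  have hv : 1 ≤ level v := Nat.one_le_iff_ne_zero.mpr fun h => hvM ((hlevel_zero v).mp h)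
  have hsub : {u | Adj u v ∧ level u < level v} ⊆ M ∩ C := by
    rintro u ⟨huv, hlt⟩
    have huC := hC huv hvC
    exact ⟨by_contra fun huM => (hmin u ⟨huC, huM⟩).not_gt hlt, huC⟩
  exact (hτ v hvC).trans ((hlevel v hv).trans (Set.ncard_le_ncard hsub))

theorem IsDynamo.card_mul_le_ncard [Finite V] (hM : IsDynamo Adj τ M) {ι : Type*}
    (s : Finset ι) {C : ι → Set V} (hdisj : (s : Set ι).PairwiseDisjoint C)
    (hC : ∀ i ∈ s, IsInClosed Adj (C i)) (hτ : ∀ i ∈ s, ∀ v ∈ C i, t ≤ τ v)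
    (hcard : ∀ i ∈ s, t ≤ (C i).ncard) : s.card * t ≤ M.ncard :=
  calc s.card * t = ∑ _i ∈ s, t := by rw [Finset.sum_const, smul_eq_mul]
    _ ≤ ∑ i ∈ s, (M ∩ C i).ncard :=
      Finset.sum_le_sum fun i hi => hM.le_ncard_inter (hC i hi) (hτ i hi) (hcard i hi)
    _ = (⋃ i ∈ s, M ∩ C i).ncard := by
      rw [← finsum_mem_coe_finset, ← Set.Finite.ncard_biUnion s.finite_toSet
        (fun _ _ => Set.toFinite _) (hdisj.mono fun _ => Set.inter_subset_right)]
      simp only [Finset.mem_coe]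
    _ ≤ M.ncard := Set.ncard_le_ncard (Set.iUnion₂_subset fun _ _ => Set.inter_subset_left)

end Dynamo

theorem le_of_eventually_le_mul_add_isLittleO {a b c : ℝ} {f : ℕ → ℝ}
    (hf : f =o[atTop] (fun n => (n : ℝ))) {s : ℕ → ℕ} (hs : Tendsto s atTop atTop)
    (h : ∀ᶠ k in atTop, a * s k - b ≤ c * s k + f (s k)) : a ≤ c := by
  have hlower : Tendsto (fun k => a - b / s k) atTop (𝓝 a) := by
    simpa using tendsto_const_nhds.sub ((tendsto_const_div_atTop_nhds_zero_nat b).comp hs)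
  have hupper : Tendsto (fun k => c + f (s k) / s k) atTop (𝓝 c) := by
    simpa using tendsto_const_nhds.add (hf.tendsto_div_nhds_zero.comp hs)
  refine le_of_tendsto_of_tendsto hlower hupper ?_
  filter_upwards [h, hs.eventually_gt_atTop 0] with k hk hpos
  have hpos : (0 : ℝ) < s k := by exact_mod_cast hpos
  calc a - b / s k = (a * s k - b) / s k := by field_simp
    _ ≤ (c * s k + f (s k)) / s k := by gcongr
    _ = c + f (s k) / s k := by field_simp

/-- Vertex `5 * i + r` (`r < 5`) is vertex `r` of the `i`-th copy of `K₅`, with edges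
`r → r + 1` and `r → r + 2` (mod 5); vertex `5 * k` is `x`, and vertex `0` of every copy
points to it. -/
def k5CopiesAdj (k : ℕ) (u v : Fin (5 * k + 1)) : Prop :=
  ((u : ℕ) < 5 * k ∧ (u : ℕ) / 5 = (v : ℕ) / 5 ∧
    ((v : ℕ) % 5 = ((u : ℕ) % 5 + 1) % 5 ∨ (v : ℕ) % 5 = ((u : ℕ) % 5 + 2) % 5)) ∨
  ((u : ℕ) < 5 * k ∧ (u : ℕ) % 5 = 0 ∧ (v : ℕ) = 5 * k)

def k5Copy (k i : ℕ) : Set (Fin (5 * k + 1)) :=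
  {v | (v : ℕ) / 5 = i}

namespace k5CopiesAdj

variable {k : ℕ}

theorem isSimple : IsSimple (k5CopiesAdj k) := by
  unfold k5CopiesAdj
  refine ⟨fun v => ?_, fun u v huv hvu => ?_⟩ <;> omega

theorem isInClosed_k5Copy {i : ℕ} (hi : i < k) : IsInClosed (k5CopiesAdj k) (k5Copy k i) := by
  intro u v
  simp only [k5CopiesAdj, k5Copy, Set.mem_ofPred_eq]
  omega

theorem two_le_inDeg {v : Fin (5 * k + 1)} (hv : (v : ℕ) < 5 * k) :
    2 ≤ inDeg (k5CopiesAdj k) v := by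
  refine (Set.one_lt_ncard (Set.toFinite _)).mpr
    ⟨⟨5 * (v / 5) + (v % 5 + 3) % 5, by omega⟩, ?_, ⟨5 * (v / 5) + (v % 5 + 4) % 5, by omega⟩,
      ?_, by simp only [ne_eq, Fin.mk.injEq]; omega⟩ <;>
  · simp only [k5CopiesAdj, Set.mem_ofPred_eq]
    omega

theorem one_le_inDeg (hk : 1 ≤ k) (v : Fin (5 * k + 1)) : 1 ≤ inDeg (k5CopiesAdj k) v := by
  rcases lt_or_ge (v : ℕ) (5 * k) with hv | hv
  · exact one_le_two.trans (two_le_inDeg hv)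
  · refine (Set.ncard_pos (Set.toFinite _)).mpr ⟨⟨0, by omega⟩, ?_⟩
    exact Or.inr ⟨show 0 < 5 * k by omega, rfl, by have := v.isLt; omega⟩

theorem two_le_ncard_k5Copy {i : ℕ} (hi : i < k) : 2 ≤ (k5Copy k i).ncard :=
  (Set.one_lt_ncard (Set.toFinite _)).mpr
    ⟨⟨5 * i, by omega⟩, by simp [k5Copy], ⟨5 * i + 1, by omega⟩,
      by simp only [k5Copy, Set.mem_ofPred_eq]; omega, by simp [Fin.ext_iff]⟩

theorem two_le_strictMajority {v : Fin (5 * k + 1)} (hv : (v : ℕ) < 5 * k) :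
    2 ≤ strictMajority (k5CopiesAdj k) v := by
  have := two_le_inDeg hv
  unfold strictMajority
  omega

theorem two_mul_le_ncard_of_isDynamo {M : Set (Fin (5 * k + 1))}
    (hM : IsDynamo (k5CopiesAdj k) (strictMajority (k5CopiesAdj k)) M) : 2 * k ≤ M.ncard := by
  simpa [mul_comm] using hM.card_mul_le_ncard (Finset.range k) (C := k5Copy k)
    (fun i _ j _ hij => Set.disjoint_left.mpr fun v hvi hvj => hij (hvi.symm.trans hvj))
    (fun i hi => isInClosed_k5Copy (Finset.mem_range.mp hi))
    (fun i hi v hv => two_le_strictMajority (by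
      simp only [k5Copy, Set.mem_ofPred_eq, Finset.mem_range] at hv hi
      omega))
    (fun i hi => two_le_ncard_k5Copy (Finset.mem_range.mp hi))

end k5CopiesAdj

/-- for every `k ≥ 1` there is a simple directed graph on `5k + 1`
vertices with positive minimum in-degree whose every strict majority dynamic monopoly has
at least `2k` vertices. Consequently, no upper bound `c·n + o(n)` with `c < 2/5` can hold
for the smallest strict majority dynamic monopoly of all `n`-vertex simple directed graphs
with positive minimum in-degree. -/
theorem no_strict_majority_bound_better_than_two_fifths :
    (∀ k : ℕ, 1 ≤ k →
      ∃ Adj : Fin (5 * k + 1) → Fin (5 * k + 1) → Prop,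
        IsSimple Adj ∧ (∀ v, 1 ≤ inDeg Adj v) ∧
        ∀ M : Set (Fin (5 * k + 1)),
          IsDynamo Adj (strictMajority Adj) M → 2 * k ≤ M.ncard) ∧
    (∀ (c : ℝ) (f : ℕ → ℝ), f =o[Filter.atTop] (fun n => (n : ℝ)) →
      (∀ (n : ℕ) (Adj : Fin n → Fin n → Prop),
        IsSimple Adj → (∀ v, 1 ≤ inDeg Adj v) →
        ∃ M : Set (Fin n), IsDynamo Adj (strictMajority Adj) M ∧
          (M.ncard : ℝ) ≤ c * n + f n) →
      (2 : ℝ) / 5 ≤ c) := by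
  refine ⟨fun k hk => ⟨k5CopiesAdj k, k5CopiesAdj.isSimple, k5CopiesAdj.one_le_inDeg hk,
    fun M hM => k5CopiesAdj.two_mul_le_ncard_of_isDynamo hM⟩, fun c f hf hbound => ?_⟩
  have hs : Tendsto (fun k => 5 * k + 1) atTop atTop :=
    tendsto_atTop_mono (fun k => by dsimp; omega) tendsto_id
  refine le_of_eventually_le_mul_add_isLittleO (b := 2 / 5) hf hs ?_
  filter_upwards [eventually_ge_atTop 1] with k hk
  obtain ⟨M, hM, hMle⟩ := hbound (5 * k + 1) (k5CopiesAdj k) k5CopiesAdj.isSimple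
    (k5CopiesAdj.one_le_inDeg hk)
  have hM2k : ((2 * k : ℕ) : ℝ) ≤ M.ncard :=
    Nat.cast_le.mpr (k5CopiesAdj.two_mul_le_ncard_of_isDynamo hM)
  push_cast at hM2k hMle ⊢
  linarith
end

section
/- Let n ≥ 3 be an odd integer and let K⃗_n be the complete bidirected graph on n vertices, in which for every pair of distinct vertices u, v there is an edge from u to v and an edge from v to u (so deg^in(v) = n−1 for every v). With the strict majority threshold τ(v) = ⌈(deg^in(v)+1)/2⌉ = (n+1)/2, every dynamic monopoly for (K⃗_n, τ) contains at least (n+1)/2 vertices. In particular, the n/2 upper bound for strict majority dynamic monopolies of simple directed graphs fails for directed graphs that allow oppositely directed edges between the same pair of vertices. -/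
/-!
Basic notions for dynamic monopolies in finite directed graphs.
A directed graph on a vertex type `V` is given by its adjacency relation
`Adj : V → V → Prop`, where `Adj u v` means there is an edge from `u` to `v`.
-/

variable {V : Type*}

/-- in the complete bidirected graph on an odd number `n ≥ 3` of vertices
(adjacency `u ≠ v`, so every in-degree is `n - 1` and the strict majority threshold is
`(n+1)/2`), every strict majority dynamic monopoly has at least `(n+1)/2` vertices. In
particular the `n/2` bound for simple directed graphs fails when oppositely directed edges
between the same pair of vertices are allowed. -/
theorem bidirected_complete_dynamo_ge_half
    (n : ℕ) (hn : 3 ≤ n) (hodd : Odd n)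
    (M : Set (Fin n))
    (hM : IsDynamo (fun u v : Fin n => u ≠ v)
      (strictMajority (fun u v : Fin n => u ≠ v)) M) :
    (n + 1) / 2 ≤ M.ncard := by
  obtain ⟨level, hlev0, hlev⟩ := hM
  by_cases hMu : M = Set.univ
  · subst hMu
    rw [Set.ncard_univ]
    simp only [Nat.card_eq_fintype_card, Fintype.card_fin]
    omega
  · have hS : {v : Fin n | 1 ≤ level v}.Nonempty := by
      obtain ⟨v, hv⟩ := (Set.ne_univ_iff_exists_notMem M).mp hMu
      exact ⟨v, Nat.one_le_iff_ne_zero.mpr (fun h => hv ((hlev0 v).mp h))⟩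
    obtain ⟨v, hv1, hmin⟩ := Set.exists_min_image _ level (Set.toFinite _) hS
    have hsub : {u : Fin n | u ≠ v ∧ level u < level v} ⊆ M := by
      intro u ⟨_, hu⟩
      rcases Nat.eq_zero_or_pos (level u) with h0 | h1
      · exact (hlev0 u).mp h0
      · exact absurd (hmin u h1) (by omega)
    have hle : {u : Fin n | u ≠ v ∧ level u < level v}.ncard ≤ M.ncard :=
      Set.ncard_le_ncard hsub M.toFinite
    have hτ := hlev v hv1
    have hdeg : inDeg (fun u v : Fin n => u ≠ v) v = n - 1 := by
      have h1 : {u : Fin n | u ≠ v} = ({v} : Set (Fin n))ᶜ := by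
        ext u; simp [Set.mem_compl_iff]
      have h2 : ({v} : Set (Fin n)).ncard + (({v} : Set (Fin n))ᶜ).ncard
          = Nat.card (Fin n) := Set.ncard_add_ncard_compl _
      simp only [Set.ncard_singleton, Nat.card_eq_fintype_card, Fintype.card_fin] at h2
      simp only [inDeg, h1]
      omega
    have hsm : strictMajority (fun u v : Fin n => u ≠ v) v = (n + 1) / 2 := by
      rw [strictMajority, hdeg]
      omega
    rw [hsm] at hτ
    calc (n + 1) / 2 ≤ _ := hτ
      _ ≤ M.ncard := hle
end
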